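/- Let $G(r,t) = (4\pi t)^{-3/2} e^{-t} \frac{r}{\sinh r} e^{-r^2/(4t)}$ and $E_1(s,t) = (4\pi t)^{-1/2} e^{-s^2/(4t)}$. Then $\int_0^\infty \big|\, 4\pi (\sinh r)^2\, G(r,t) - E_1(r - 2t,\, t) \,\big|\, dr \to 0$ as $t \to \infty$. -/

import Mathlib

open Real Filter MeasureTheory

/-- The fundamental solution of the heat equation on `ℍ³` in geodesic polar
coordinates: `G(r,t) = (4πt)^(-3/2) e^{-t} (r / sinh r) e^{-r²/(4t)}`. -/
noncomputable def hypHeatKernel (r t : ℝ) : ℝ :=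
  (4 * π * t) ^ (-(3 : ℝ) / 2) * Real.exp (-t) * (r / Real.sinh r) *
    Real.exp (-r ^ 2 / (4 * t))

/-- The one-dimensional Gaussian heat kernel `E₁(s,t) = (4πt)^(-1/2) e^{-s²/(4t)}`. -/
noncomputable def gaussKernel1D (s t : ℝ) : ℝ :=
  (4 * π * t) ^ (-(1 : ℝ) / 2) * Real.exp (-s ^ 2 / (4 * t))

/-!
Writing `sinh r = (eʳ - e⁻ʳ) / 2` and completing the square in the exponents gives the exact
identity `ρ(r,t) = r/(2t) · (E₁(r - 2t, t) - E₁(r + 2t, t))`. Hence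
`ρ(r,t) - E₁(r - 2t, t) = ((r - 2t) E₁(r - 2t, t) - r E₁(r + 2t, t)) / (2t)`, and since `r ≤ r + 2t`
both terms are dominated by translates of `|s| E₁(s,t) / (2t)`. The first absolute moment of
`E₁(·,t)` is `2 √(t/π)`, so the `L¹` distance is at most `2 / √(π t) → 0`.
-/

open Set

lemma integral_Ioi_mul_exp_neg_mul_sq {b : ℝ} (hb : 0 < b) :
    ∫ x in Ioi (0 : ℝ), x * exp (-b * x ^ 2) = (2 * b)⁻¹ := by
  have h := integral_mul_cexp_neg_mul_sq (b := (b : ℂ)) (by simpa using hb)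
  apply Complex.ofReal_injective
  rw [← integral_complex_ofReal]
  push_cast
  exact h

lemma integral_abs_mul_exp_neg_mul_sq {b : ℝ} (hb : 0 < b) :
    ∫ x : ℝ, |x| * exp (-b * x ^ 2) = b⁻¹ := by
  have h := integral_comp_abs (f := fun x => x * exp (-b * x ^ 2))
  simp only [sq_abs] at h
  rw [h, integral_Ioi_mul_exp_neg_mul_sq hb]
  field_simp

lemma integrable_abs_mul_exp_neg_mul_sq {b : ℝ} (hb : 0 < b) :
    Integrable fun x : ℝ => |x| * exp (-b * x ^ 2) := by
  simpa [abs_mul] using (integrable_mul_exp_neg_mul_sq hb).abs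

section gaussKernel1D

variable {t : ℝ}

lemma gaussKernel1D_nonneg (ht : 0 ≤ t) (s : ℝ) : 0 ≤ gaussKernel1D s t := by
  unfold gaussKernel1D; positivity

lemma abs_mul_gaussKernel1D (s : ℝ) :
    |s| * gaussKernel1D s t =
      (4 * π * t) ^ (-(1 : ℝ) / 2) * (|s| * exp (-(4 * t)⁻¹ * s ^ 2)) := by
  rw [gaussKernel1D, show -s ^ 2 / (4 * t) = -(4 * t)⁻¹ * s ^ 2 by ring]; ring

lemma integrable_abs_mul_gaussKernel1D (ht : 0 < t) :
    Integrable fun s => |s| * gaussKernel1D s t := by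
  simp_rw [abs_mul_gaussKernel1D]
  exact (integrable_abs_mul_exp_neg_mul_sq (by positivity)).const_mul _

lemma integral_abs_mul_gaussKernel1D (ht : 0 < t) :
    ∫ s, |s| * gaussKernel1D s t = 4 * t * (4 * π * t) ^ (-(1 : ℝ) / 2) := by
  simp_rw [abs_mul_gaussKernel1D]
  rw [integral_const_mul, integral_abs_mul_exp_neg_mul_sq (by positivity), inv_inv, mul_comm]

lemma tendsto_gaussKernel1D_prefactor_atTop :
    Tendsto (fun t : ℝ => (4 * π * t) ^ (-(1 : ℝ) / 2)) atTop (nhds 0) := by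
  have h := (tendsto_rpow_neg_atTop (y := 1 / 2) one_half_pos).comp
    (tendsto_id.const_mul_atTop (by positivity : (0 : ℝ) < 4 * π))
  simpa [Function.comp_def, neg_div] using h

end gaussKernel1D

noncomputable def hypHeatDensity (r t : ℝ) : ℝ :=
  4 * π * sinh r ^ 2 * hypHeatKernel r t

lemma hypHeatDensity_eq {t : ℝ} (ht : 0 < t) (r : ℝ) :
    hypHeatDensity r t =
      r / (2 * t) * (gaussKernel1D (r - 2 * t) t - gaussKernel1D (r + 2 * t) t) := by
  have hpow : (4 * π * t) ^ (-(3 : ℝ) / 2) = (4 * π * t) ^ (-(1 : ℝ) / 2) * (4 * π * t)⁻¹ := by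
    rw [← rpow_neg_one, ← rpow_add (by positivity)]; norm_num
  have hsinh : r / sinh r * sinh r ^ 2 = r * sinh r := by
    rcases eq_or_ne (sinh r) 0 with h | h
    · simp [h]
    · field_simp
  have hexp_sub : exp r * exp (-t) * exp (-r ^ 2 / (4 * t)) =
      exp (-(r - 2 * t) ^ 2 / (4 * t)) := by
    rw [← exp_add, ← exp_add]; congr 1; field_simp; ring
  have hexp_add : exp (-r) * exp (-t) * exp (-r ^ 2 / (4 * t)) =
      exp (-(r + 2 * t) ^ 2 / (4 * t)) := by
    rw [← exp_add, ← exp_add]; congr 1; field_simp; ring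
  rw [hypHeatDensity, hypHeatKernel, hpow, gaussKernel1D, gaussKernel1D, ← hexp_sub, ← hexp_add]
  calc _ = (4 * π * t) ^ (-(1 : ℝ) / 2) * (4 * π * t)⁻¹ * (4 * π) *
        (r / sinh r * sinh r ^ 2) * exp (-t) * exp (-r ^ 2 / (4 * t)) := by ring
    _ = _ := by rw [hsinh, sinh_eq]; field_simp

section hypHeatDensity

variable {t : ℝ} (ht : 0 < t)
include ht

lemma hypHeatDensity_sub_gaussKernel1D (r : ℝ) :
    hypHeatDensity r t - gaussKernel1D (r - 2 * t) t =
      ((r - 2 * t) * gaussKernel1D (r - 2 * t) t - r * gaussKernel1D (r + 2 * t) t) /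
        (2 * t) := by
  rw [hypHeatDensity_eq ht]
  field_simp
  ring

lemma abs_hypHeatDensity_sub_gaussKernel1D_le {r : ℝ} (hr : 0 ≤ r) :
    |hypHeatDensity r t - gaussKernel1D (r - 2 * t) t| ≤
      (|r - 2 * t| * gaussKernel1D (r - 2 * t) t + |r + 2 * t| * gaussKernel1D (r + 2 * t) t) /
        (2 * t) := by
  have hE := gaussKernel1D_nonneg ht.le
  have hr' : |r| ≤ |r + 2 * t| := by
    rw [abs_of_nonneg hr, abs_of_nonneg (by linarith)]; linarith
  rw [hypHeatDensity_sub_gaussKernel1D ht, abs_div, abs_of_pos (by linarith : (0 : ℝ) < 2 * t)]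
  refine div_le_div_of_nonneg_right ?_ (by linarith)
  calc _ ≤ |(r - 2 * t) * gaussKernel1D (r - 2 * t) t| + |r * gaussKernel1D (r + 2 * t) t| :=
        abs_sub _ _
    _ ≤ _ := by
      rw [abs_mul, abs_mul, abs_of_nonneg (hE _), abs_of_nonneg (hE _)]
      gcongr
      exact hE _

lemma integral_Ioi_abs_hypHeatDensity_sub_gaussKernel1D_le :
    ∫ r in Ioi 0, |hypHeatDensity r t - gaussKernel1D (r - 2 * t) t| ≤
      4 * (4 * π * t) ^ (-(1 : ℝ) / 2) := by
  let f : ℝ → ℝ := fun s => |s| * gaussKernel1D s t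
  let g : ℝ → ℝ := fun r => (f (r - 2 * t) + f (r + 2 * t)) / (2 * t)
  have hf : Integrable f := integrable_abs_mul_gaussKernel1D ht
  have hg : Integrable g :=
    ((hf.comp_sub_right (2 * t)).add (hf.comp_add_right (2 * t))).div_const _
  have hf_nonneg : ∀ s, 0 ≤ f s := fun s =>
    mul_nonneg (abs_nonneg s) (gaussKernel1D_nonneg ht.le s)
  have hg_nonneg : 0 ≤ g := fun r =>
    div_nonneg (add_nonneg (hf_nonneg _) (hf_nonneg _)) (by linarith)
  calc _ ≤ ∫ r in Ioi 0, g r :=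
        integral_mono_of_nonneg (Eventually.of_forall fun _ => abs_nonneg _) hg.integrableOn <|
          (ae_restrict_iff' measurableSet_Ioi).2 <| Eventually.of_forall fun r hr =>
            abs_hypHeatDensity_sub_gaussKernel1D_le ht (le_of_lt hr)
    _ ≤ ∫ r, g r := setIntegral_le_integral hg (Eventually.of_forall hg_nonneg)
    _ = 2 * (∫ s, |s| * gaussKernel1D s t) / (2 * t) := by
      rw [integral_div, integral_add (hf.comp_sub_right _) (hf.comp_add_right _),
        integral_sub_right_eq_self f, integral_add_right_eq_self f, ← two_mul]
    _ = _ := by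
      rw [integral_abs_mul_gaussKernel1D ht]; field_simp

end hypHeatDensity

/-- After subtracting the drift `r = 2t`, the radial mass density of the hyperbolic heat
kernel on `ℍ³` converges in `L¹` to the 1D Euclidean heat kernel. -/
theorem hypHeatKernel_density_L1_convergence :
    Tendsto (fun t : ℝ =>
        ∫ r in Set.Ioi (0 : ℝ),
          |4 * π * (Real.sinh r) ^ 2 * hypHeatKernel r t - gaussKernel1D (r - 2 * t) t|)
      atTop (nhds 0) := by
  have hbound := tendsto_gaussKernel1D_prefactor_atTop.const_mul 4
  rw [mul_zero] at hbound
  refine squeeze_zero' (Eventually.of_forall fun t =>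
    setIntegral_nonneg measurableSet_Ioi fun r _ => abs_nonneg _) ?_ hbound
  filter_upwards [eventually_gt_atTop 0] with t ht
  exact integral_Ioi_abs_hypHeatDensity_sub_gaussKernel1D_le ht
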